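/- arXiv:1402.5361 — 4 statements merged into one kernel-verified Lean document; each statement's English description precedes it below -/
import Mathlib

section
/- For every finite O-sequence h = (1, h_1, …, h_{s-1}) of multiplicity d ≥ 2, the sequence obtained from h by decreasing its last entry h_{s-1} by 1 (deleting this entry if h_{s-1} = 1) is again a finite O-sequence, of multiplicity d-1. Consequently, every finite O-sequence of multiplicity d can be obtained from the length-one O-sequence (1) by a chain of d-1 steps, each step increasing a single entry by 1 (possibly appending a new final entry equal to 1) and producing a finite O-sequence. -/
/-- The Macaulay bound `a^⟨t⟩`: if `a = C(k_t,t) + C(k_{t-1},t-1) + ⋯ + C(k_j,j)` is the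
binomial expansion of `a` in base `t`, then `a^⟨t⟩ = C(k_t+1,t+1) + ⋯ + C(k_j+1,j+1)`.
Computed greedily; `mac t a = a^⟨t⟩` for `t ≥ 1`. -/
def mac : ℕ → ℕ → ℕ
  | 0, _ => 0
  | t+1, a =>
    if a = 0 then 0
    else
      Nat.choose (Nat.findGreatest (fun n => Nat.choose n (t+1) ≤ a) (a + t + 1) + 1) (t+2) +
        mac t (a - Nat.choose (Nat.findGreatest (fun n => Nat.choose n (t+1) ≤ a) (a + t + 1)) (t+1))

/-- `h : ℕ → ℕ` is a finite O-sequence of length `s`: `h 0 = 1`, the entries `h 0, …, h (s-1)`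
are positive, entries from index `s` on are zero, and `h (t+1) ≤ (h t)^⟨t⟩` for all `t ≥ 1`. -/
def IsOSeq (h : ℕ → ℕ) (s : ℕ) : Prop :=
  h 0 = 1 ∧ (∀ i, 0 < h i ↔ i < s) ∧ ∀ t, 1 ≤ t → h (t + 1) ≤ mac t (h t)

/-- The multiplicity `e(h) = h_0 + ⋯ + h_{s-1}` of a finite O-sequence of length `s`. -/
def mult (h : ℕ → ℕ) (s : ℕ) : ℕ := ∑ i ∈ Finset.range s, h i

/-- The genus `g(h) = Σ_{j=2}^{s-1} (j-1)·h_j` of a finite O-sequence of length `s`. -/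
def genus (h : ℕ → ℕ) (s : ℕ) : ℕ := ∑ j ∈ Finset.range s, (j - 1) * h j

/-- The sequence obtained from `h` by increasing the `i`-th entry by `1`, i.e. `h + e_i`. -/
def addE (h : ℕ → ℕ) (i : ℕ) : ℕ → ℕ := fun j => if j = i then h j + 1 else h j

/-- The sequence obtained from `h` by decreasing the `i`-th entry by `1`, i.e. `h - e_i`. -/
def subE (h : ℕ → ℕ) (i : ℕ) : ℕ → ℕ := fun j => if j = i then h j - 1 else h j

/-- The total order on finite O-sequences of the same length: `oLT h k` iff `h_ℓ < k_ℓ`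
where `ℓ = max{ j : h_j ≠ k_j }`. -/
def oLT (h k : ℕ → ℕ) : Prop := ∃ ℓ, h ℓ < k ℓ ∧ ∀ j, ℓ < j → h j = k j

/-- The set of genera of finite O-sequences of multiplicity `d` and length `s`. -/
def genusSet (d s : ℕ) : Set ℕ := {g | ∃ h, IsOSeq h s ∧ mult h s = d ∧ genus h s = g}

/-- `G_d`: the set of genera of finite O-sequences of multiplicity `d` (of any length). -/
def GSet (d : ℕ) : Set ℕ := {g | ∃ h s, IsOSeq h s ∧ mult h s = d ∧ genus h s = g}

/-- `g` is a gap in `R_d = [0, C(d-1,2)]`: it lies in the range but is not the genus of any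
finite O-sequence of multiplicity `d`. -/
def IsGap (d g : ℕ) : Prop :=
  g ≤ Nat.choose (d - 1) 2 ∧ ∀ h s, IsOSeq h s → mult h s = d → genus h s ≠ g

/-- The O-sequence `(1, d-s+1, 1^{s-2})`, minimal in `𝒢_d^s`. -/
def minSeq (d s : ℕ) : ℕ → ℕ :=
  fun j => if j = 0 then 1 else if j = 1 then d - s + 1 else if j < s then 1 else 0

/-- The O-sequence `(1, 2^{d-s}, 1^{2s-d-1})`, maximal in `𝒢_d^s`. -/
def maxSeq (d s : ℕ) : ℕ → ℕ :=
  fun j => if j = 0 then 1 else if j ≤ d - s then 2 else if j < s then 1 else 0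

/-- The O-sequence `(1, d-1)`. -/
def twoSeq (d : ℕ) : ℕ → ℕ := fun j => if j = 0 then 1 else if j = 1 then d - 1 else 0

/-- The operation `h ↦ h - e_{s-1} + e_1` on a sequence of length `s`. -/
def downUp (h : ℕ → ℕ) (s : ℕ) : ℕ → ℕ :=
  fun j => if j = s - 1 then h j - 1 else if j = 1 then h j + 1 else h j

/-- The largest index `1 ≤ j ≤ s-1` with `h j > 1` (and `0` if there is none). -/
def topIdx (h : ℕ → ℕ) (s : ℕ) : ℕ := Nat.findGreatest (fun j => 1 < h j) (s - 1)

/-- The operation `h ↦ h - e_i + e_1` where `i = topIdx h s`. -/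
def shiftDown (h : ℕ → ℕ) (s : ℕ) : ℕ → ℕ :=
  fun j => if j = topIdx h s then h j - 1 else if j = 1 then h j + 1 else h j

/-- Auxiliary list `[m_n, m_{n-1}, …, m_1]` for the recursively defined sequence `(m_d)`. -/
def mListAux : ℕ → List ℕ
  | 0 => []
  | n+1 =>
    let prev := mListAux n
    let newVal :=
      if n = 0 then 0
      else
        (List.range' 2 (n - 1)).foldl
          (fun M k =>
            if Nat.choose k 2 - 1 ≤ M then max M (prev.getD (k - 1) 0 + Nat.choose k 2) else M)
          (prev.getD 0 0)
    newVal :: prev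

/-- The sequence `(m_d)_{d ≥ 1}`: `m_1 = 0` and, for `d ≥ 2`, `m_d` is obtained from
`M := m_{d-1}` by running over `k = 2, …, d-1` and replacing `M` by
`max M (m_{d-k} + C(k,2))` whenever `C(k,2) - 1 ≤ M`. -/
def mSeq (d : ℕ) : ℕ := (mListAux d).getD 0 0

/-! Removing one box from the last entry cannot break Macaulay's condition: the entries before it
are unchanged, the bound `h_{s-1} ≤ h_{s-2}^⟨s-2⟩` only gets easier, and there is nothing after
it. Iterating from `h` down to `(1)` and reversing the order gives the chain. -/

namespace IsOSeq

variable {h : ℕ → ℕ} {s : ℕ}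

lemma length_pos (hO : IsOSeq h s) : 0 < s :=
  (hO.2.1 0).mp (by rw [hO.1]; norm_num)

lemma pos_of_lt (hO : IsOSeq h s) {i : ℕ} (hi : i < s) : 0 < h i :=
  (hO.2.1 i).mpr hi

lemma eq_zero_of_le (hO : IsOSeq h s) {i : ℕ} (hi : s ≤ i) : h i = 0 := by
  have := hO.2.1 i
  omega

lemma two_le_mult_iff (hO : IsOSeq h s) : 2 ≤ mult h s ↔ 2 ≤ s := by
  constructor
  · intro hm
    by_contra! hs
    obtain rfl : s = 1 := by have := hO.length_pos; omega
    simp [mult, hO.1] at hm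
  · intro hs
    have hsub := Finset.sum_le_sum_of_subset (f := h) (Finset.range_subset_range.mpr hs)
    have := hO.pos_of_lt (i := 1) (by omega)
    simp only [Finset.sum_range_succ, Finset.sum_range_zero, hO.1] at hsub
    unfold mult
    omega

lemma eq_one_of_mult_eq_one (hO : IsOSeq h s) (hm : mult h s = 1) :
    h = fun j => if j = 0 then 1 else 0 := by
  have hs : s = 1 := by
    have := hO.two_le_mult_iff
    have := hO.length_pos
    omega
  funext j
  split_ifs with hj
  · rw [hj, hO.1]
  · exact hO.eq_zero_of_le (by omega)

lemma subE_last (hO : IsOSeq h s) (hs : 2 ≤ s) :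
    IsOSeq (subE h (s - 1)) (if h (s - 1) = 1 then s - 1 else s) := by
  have hlast := hO.pos_of_lt (i := s - 1) (by omega)
  refine ⟨by simp [subE, show (0 : ℕ) ≠ s - 1 by omega, hO.1], fun i => ?_, fun t ht => ?_⟩
  · by_cases hi : i = s - 1
    · subst hi
      simp only [subE]
      split_ifs <;> omega
    · have := hO.2.1 i
      simp only [subE, if_neg hi]
      split_ifs <;> omega
  · by_cases hts : t = s - 1
    · simp [subE, show t + 1 ≠ s - 1 by omega, hO.eq_zero_of_le (i := t + 1) (by omega)]
    · calc subE h (s - 1) (t + 1) ≤ h (t + 1) := by unfold subE; split_ifs <;> omega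
        _ ≤ mac t (h t) := hO.2.2 t ht
        _ = mac t (subE h (s - 1) t) := by simp [subE, hts]

lemma mult_subE_last (hO : IsOSeq h s) :
    mult (subE h (s - 1)) (if h (s - 1) = 1 then s - 1 else s) = mult h s - 1 := by
  obtain ⟨t, rfl⟩ : ∃ t, s = t + 1 := ⟨s - 1, by have := hO.length_pos; omega⟩
  have hlast := hO.pos_of_lt (i := t) (by omega)
  have hprefix : mult (subE h t) t = mult h t :=
    Finset.sum_congr rfl fun j hj => by
      simp [subE, show j ≠ t by simpa using (Finset.mem_range.mp hj).ne]
  have hlastE : subE h t t = h t - 1 := by simp [subE]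
  simp only [Nat.add_sub_cancel, mult] at hprefix ⊢
  split_ifs
  · rw [hprefix, Finset.sum_range_succ]
    omega
  · rw [Finset.sum_range_succ, Finset.sum_range_succ, hprefix, hlastE]
    omega

end IsOSeq

def IsUnitStep (k k' : ℕ → ℕ) : Prop :=
  ∃ i, k' i = k i + 1 ∧ ∀ j, j ≠ i → k' j = k j

lemma isUnitStep_subE {h : ℕ → ℕ} {i : ℕ} (hi : 0 < h i) : IsUnitStep (subE h i) h :=
  ⟨i, by simp [subE]; omega, fun j hj => by simp [subE, hj]⟩

lemma exists_chain_of_isOSeq (n : ℕ) {h : ℕ → ℕ} {s : ℕ} (hO : IsOSeq h s)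
    (hm : mult h s = n + 1) :
    ∃ (c : ℕ → ℕ → ℕ) (σ : ℕ → ℕ), (c 0 = fun j => if j = 0 then 1 else 0) ∧ c n = h ∧
      (∀ m, m ≤ n → IsOSeq (c m) (σ m)) ∧ ∀ m, m < n → IsUnitStep (c m) (c (m + 1)) := by
  induction n generalizing h s with
  | zero => exact ⟨fun _ => h, fun _ => s, hO.eq_one_of_mult_eq_one hm, rfl, fun _ _ => hO,
      fun _ hm => absurd hm (Nat.not_lt_zero _)⟩
  | succ n ih =>
    have hs := hO.two_le_mult_iff.mp (by omega)
    obtain ⟨c, σ, hc0, hcn, hcO, hcstep⟩ :=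
      ih (hO.subE_last hs) (by rw [hO.mult_subE_last, hm]; rfl)
    refine ⟨Function.update c (n + 1) h, Function.update σ (n + 1) s, by simpa using hc0,
      by simp, fun m hm => ?_, fun m hm => ?_⟩
    · rcases Nat.lt_or_eq_of_le hm with hm | rfl
      · rw [Function.update_of_ne hm.ne, Function.update_of_ne hm.ne]
        exact hcO m (by omega)
      · simpa using hO
    · rcases Nat.lt_or_eq_of_le (Nat.le_of_lt_succ hm) with hm | rfl
      · rw [Function.update_of_ne (by omega), Function.update_of_ne (by omega)]
        exact hcstep m hm
      · simpa [hcn] using isUnitStep_subE (hO.pos_of_lt (by omega))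

/-- For every finite O-sequence `h` of multiplicity `d ≥ 2`, decreasing its
last entry by `1` (the entry disappears when it equals `1`) yields a finite O-sequence of
multiplicity `d - 1`. Consequently, every finite O-sequence of multiplicity `d` is obtained
from the length-one O-sequence `(1)` by a chain of `d - 1` steps, each increasing a single
entry by `1` and producing a finite O-sequence. -/
theorem stmt0 (h : ℕ → ℕ) (s d : ℕ) (hO : IsOSeq h s) (he : mult h s = d) (hd : 2 ≤ d) :
    (IsOSeq (subE h (s - 1)) (if h (s - 1) = 1 then s - 1 else s) ∧
      mult (subE h (s - 1)) (if h (s - 1) = 1 then s - 1 else s) = d - 1) ∧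
    (∃ (c : ℕ → ℕ → ℕ) (σ : ℕ → ℕ),
      (∀ j, c 0 j = if j = 0 then 1 else 0) ∧
      c (d - 1) = h ∧
      (∀ m, m ≤ d - 1 → IsOSeq (c m) (σ m)) ∧
      (∀ m, m < d - 1 → ∃ i, c (m + 1) i = c m i + 1 ∧ ∀ j, j ≠ i → c (m + 1) j = c m j)) := by
  subst he
  refine ⟨⟨hO.subE_last (hO.two_le_mult_iff.mp hd), hO.mult_subE_last⟩, ?_⟩
  obtain ⟨c, σ, hc0, hcn, hcO, hcstep⟩ := exists_chain_of_isOSeq (mult h s - 1) hO (by omega)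
  exact ⟨c, σ, fun j => congrFun hc0 j, hcn, hcO, hcstep⟩
end

section
/- Let h = (1, h_1, …, h_{s-1}) be a finite O-sequence of length s different from the all-ones sequence (1^s), and let k = max{1 ≤ i ≤ s-1 : h_i > 1}. Then the sequence h - e_k obtained by decreasing the k-th entry of h by 1 is a finite O-sequence of length s and multiplicity e(h) - 1. Consequently, every finite O-sequence of length s and multiplicity d can be obtained from (1^s) by d - s steps, each increasing a single entry by 1, with all intermediate sequences being finite O-sequences of length s. -/
/-!
Lowering the last entry `h_k > 1` of an O-sequence by one only touches two Macaulay conditions: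
at `k - 1` the left-hand side decreases, and at `k` we have `h_{k+1} ≤ 1 ≤ (h_k - 1)^⟨k⟩`, because
the Macaulay bound of a positive number is positive. Repeating this step walks from `h` down to
`(1^s)` in `e(h) - s` steps; read backwards, it is the required chain of unit increases.
-/

open Finset

lemma mac_pos {t a : ℕ} (ht : t ≠ 0) (ha : a ≠ 0) : 0 < mac t a := by
  obtain ⟨u, rfl⟩ := Nat.exists_eq_succ_of_ne_zero ht
  rw [mac, if_neg ha]
  have hN : u + 1 ≤ Nat.findGreatest (fun n => Nat.choose n (u + 1) ≤ a) (a + u + 1) :=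
    Nat.le_findGreatest (by omega) (by rw [Nat.choose_self]; omega)
  exact Nat.add_pos_left (Nat.choose_pos (by omega)) _

lemma mult_subE {h : ℕ → ℕ} {s k : ℕ} (hk : k < s) (hpos : 0 < h k) :
    mult (subE h k) s + 1 = mult h s := by
  have hmem : k ∈ range s := mem_range.2 hk
  unfold mult
  rw [← add_sum_erase _ _ hmem, ← add_sum_erase _ _ hmem,
    sum_congr rfl fun i hi => show subE h k i = h i from if_neg (ne_of_mem_erase hi)]
  have hkk : subE h k k = h k - 1 := if_pos rfl
  rw [add_right_comm, hkk, Nat.sub_add_cancel hpos]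

lemma isOSeq_subE {h : ℕ → ℕ} {s k : ℕ} (hO : IsOSeq h s) (hk : 1 < h k)
    (htail : ∀ i, k < i → h i ≤ 1) :
    IsOSeq (subE h k) s := by
  obtain ⟨h0, hpos, hmac⟩ := hO
  have hk0 : k ≠ 0 := by rintro rfl; omega
  refine ⟨by simp [subE, Ne.symm hk0, h0], fun i => ?_, fun t ht => ?_⟩
  · unfold subE
    split_ifs with hik
    · subst hik
      exact ⟨fun _ => (hpos i).1 (by omega), fun _ => by omega⟩
    · exact hpos i
  · rcases eq_or_ne t k with rfl | htk
    · have hnext : h (t + 1) ≤ 1 := htail _ (by omega)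
      have := mac_pos (t := t) (a := h t - 1) (by omega) (by omega)
      have hkk : subE h t t = h t - 1 := if_pos rfl
      have hsucc : subE h t (t + 1) = h (t + 1) := if_neg (by omega)
      rw [hkk, hsucc]
      omega
    · calc subE h k (t + 1) ≤ h (t + 1) := by unfold subE; split_ifs <;> omega
        _ ≤ mac t (h t) := hmac t ht
        _ = mac t (subE h k t) := by simp [subE, htk]

namespace IsOSeq

variable {h : ℕ → ℕ} {s : ℕ}

lemma length_le_mult (hO : IsOSeq h s) : s ≤ mult h s :=
  calc s = ∑ _i ∈ range s, 1 := by simp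
    _ ≤ mult h s := sum_le_sum fun i hi => (hO.2.1 i).2 (mem_range.1 hi)

lemma one_lt_apply_topIdx (hO : IsOSeq h s) (hmult : s < mult h s) : 1 < h (topIdx h s) := by
  obtain ⟨i, hi⟩ : ∃ i, 1 < h i := by
    by_contra! H
    have : mult h s ≤ s :=
      calc mult h s ≤ ∑ _i ∈ range s, 1 := sum_le_sum fun i _ => H i
        _ = s := by simp
    omega
  have his : i < s := (hO.2.1 i).1 (by omega)
  exact Nat.findGreatest_spec (P := fun j => 1 < h j) (by omega) hi

lemma apply_le_one_of_topIdx_lt (hO : IsOSeq h s) {i : ℕ} (hi : topIdx h s < i) : h i ≤ 1 := by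
  by_cases his : i < s
  · exact not_lt.1 (Nat.findGreatest_is_greatest (P := fun j => 1 < h j) hi (by omega))
  · have := (hO.2.1 i).not.2 his
    omega

end IsOSeq

def IsOSeqChain (s n : ℕ) (h : ℕ → ℕ) (c : ℕ → ℕ → ℕ) : Prop :=
  (∀ j, c 0 j = if j < s then 1 else 0) ∧
    c n = h ∧
    (∀ m, m ≤ n → IsOSeq (c m) s) ∧
    (∀ m, m < n → ∃ i, c (m + 1) i = c m i + 1 ∧ ∀ j, j ≠ i → c (m + 1) j = c m j)

lemma isOSeqChain_zero {h : ℕ → ℕ} {s : ℕ} (hO : IsOSeq h s) (hmult : mult h s = s) :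
    IsOSeqChain s 0 h fun _ => h := by
  have hone : ∀ i ∈ range s, 1 = h i :=
    (sum_eq_sum_iff_of_le fun i hi => (hO.2.1 i).2 (mem_range.1 hi)).1
      (by simpa [mult] using hmult.symm)
  refine ⟨fun j => ?_, rfl, fun _ _ => hO, fun m hm => absurd hm (Nat.not_lt_zero m)⟩
  split_ifs with hj
  · exact (hone j (mem_range.2 hj)).symm
  · exact Nat.eq_zero_of_not_pos fun hpos => hj ((hO.2.1 j).1 hpos)

lemma IsOSeqChain.snoc {h h' : ℕ → ℕ} {s n : ℕ} {c : ℕ → ℕ → ℕ} (hc : IsOSeqChain s n h' c)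
    (hO : IsOSeq h s) (i : ℕ) (hi : h i = h' i + 1) (hne : ∀ j, j ≠ i → h j = h' j) :
    IsOSeqChain s (n + 1) h (Function.update c (n + 1) h) := by
  obtain ⟨h0, hn, hO', hstep⟩ := hc
  refine ⟨by rw [Function.update_of_ne (by omega)]; exact h0, by simp, fun m hm => ?_,
    fun m hm => ?_⟩
  · rcases hm.eq_or_lt with rfl | hm
    · simpa using hO
    · rw [Function.update_of_ne (by omega)]
      exact hO' m (by omega)
  · rw [Function.update_of_ne (by omega : m ≠ n + 1)]
    rcases (Nat.lt_succ_iff.1 hm).eq_or_lt with rfl | hm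
    · simpa [hn] using ⟨i, hi, hne⟩
    · rw [Function.update_of_ne (by omega)]
      exact hstep m hm

lemma IsOSeq.exists_chain {h : ℕ → ℕ} {s n : ℕ} (hO : IsOSeq h s) (hmult : mult h s = s + n) :
    ∃ c, IsOSeqChain s n h c := by
  induction n generalizing h with
  | zero => exact ⟨_, isOSeqChain_zero hO hmult⟩
  | succ n ih =>
    have hk : 1 < h (topIdx h s) := hO.one_lt_apply_topIdx (by omega)
    set k := topIdx h s
    have hks : k < s := (hO.2.1 k).1 (by omega)
    have hmult' := mult_subE hks (by omega : 0 < h k)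
    obtain ⟨c, hc⟩ := ih (isOSeq_subE hO hk fun _ => hO.apply_le_one_of_topIdx_lt) (by omega)
    exact ⟨_, hc.snoc hO k (by simp [subE]; omega) fun j hj => by simp [subE, hj]⟩

theorem stmt1_general (h : ℕ → ℕ) (s d k : ℕ) (hO : IsOSeq h s) (he : mult h s = d)
    (hk3 : 1 < h k)
    (hkmax : ∀ i, 1 ≤ i → i ≤ s - 1 → 1 < h i → i ≤ k) :
    (IsOSeq (subE h k) s ∧ mult (subE h k) s = d - 1) ∧
    (∀ h' : ℕ → ℕ, IsOSeq h' s → mult h' s = d →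
      ∃ c : ℕ → ℕ → ℕ,
        (∀ j, c 0 j = if j < s then 1 else 0) ∧
        c (d - s) = h' ∧
        (∀ m, m ≤ d - s → IsOSeq (c m) s) ∧
        (∀ m, m < d - s → ∃ i, c (m + 1) i = c m i + 1 ∧ ∀ j, j ≠ i → c (m + 1) j = c m j)) := by
  have hk0 : 0 < h k := by omega
  have hks : k < s := (hO.2.1 k).1 hk0
  refine ⟨⟨isOSeq_subE hO hk3 fun i hki => ?_, by have := mult_subE hks hk0; omega⟩,
    fun h' hO' he' => hO'.exists_chain (by have := hO'.length_le_mult; omega)⟩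
  by_contra! hi
  have his : i < s := (hO.2.1 i).1 (by omega)
  have := hkmax i (by omega) (by omega) hi
  omega

/-- If `h` is a finite O-sequence of length `s` different from `(1^s)` and
`k = max{1 ≤ i ≤ s-1 : h_i > 1}`, then `h - e_k` is a finite O-sequence of length `s` and
multiplicity `e(h) - 1`. Consequently, every finite O-sequence of length `s` and multiplicity
`d` is obtained from `(1^s)` by `d - s` steps, each increasing a single entry by `1`, all
intermediate sequences being finite O-sequences of length `s`. -/
theorem stmt1 (h : ℕ → ℕ) (s d k : ℕ) (hO : IsOSeq h s) (he : mult h s = d)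
    (hk1 : 1 ≤ k) (hk2 : k ≤ s - 1) (hk3 : 1 < h k)
    (hkmax : ∀ i, 1 ≤ i → i ≤ s - 1 → 1 < h i → i ≤ k) :
    (IsOSeq (subE h k) s ∧ mult (subE h k) s = d - 1) ∧
    (∀ h' : ℕ → ℕ, IsOSeq h' s → mult h' s = d →
      ∃ c : ℕ → ℕ → ℕ,
        (∀ j, c 0 j = if j < s then 1 else 0) ∧
        c (d - s) = h' ∧
        (∀ m, m ≤ d - s → IsOSeq (c m) s) ∧
        (∀ m, m < d - s → ∃ i, c (m + 1) i = c m i + 1 ∧ ∀ j, j ≠ i → c (m + 1) j = c m j)) :=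
  stmt1_general h s d k hO he hk3 hkmax
end

section
/- Let d ≥ s ≥ 2 and let h = (1, h_1, …, h_{s-1}) and k = (1, k_1, …, k_{s-1}) be finite O-sequences of multiplicity d and length s such that k < h in the total order < and g(k) > g(h). Then there exists a finite O-sequence h̄ of multiplicity d and length s with h < h̄ and g(h̄) > g(k). -/
open Finset

lemma sub_le_choose_succ (n t : ℕ) : n - t ≤ n.choose (t + 1) := by
  induction n with
  | zero => simp
  | succ n ih =>
    rcases le_or_gt t n with htn | hnt
    · have := Nat.choose_pos htn
      rw [Nat.choose_succ_succ']
      omega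
    · omega

/-- The top index `k_t` of the binomial expansion of `a` in base `t + 1`. -/
def macTop (t a : ℕ) : ℕ := Nat.findGreatest (fun n => n.choose (t + 1) ≤ a) (a + t + 1)

lemma le_macTop_iff {t a n : ℕ} : n ≤ macTop t a ↔ n.choose (t + 1) ≤ a := by
  constructor
  · intro hn
    have hspec : (macTop t a).choose (t + 1) ≤ a :=
      Nat.findGreatest_spec (P := fun n => n.choose (t + 1) ≤ a) (m := 0) (by omega) (by simp)
    exact (Nat.choose_le_choose _ hn).trans hspec
  · intro hn
    have := sub_le_choose_succ n t
    exact Nat.le_findGreatest (by omega) hn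

lemma choose_macTop_le (t a : ℕ) : (macTop t a).choose (t + 1) ≤ a :=
  le_macTop_iff.1 le_rfl

lemma lt_choose_macTop_succ (t a : ℕ) : a < (macTop t a + 1).choose (t + 1) :=
  not_le.1 fun h => by simpa using le_macTop_iff.2 h

lemma mac_succ_of_ne_zero {t a : ℕ} (ha : a ≠ 0) :
    mac (t + 1) a = (macTop t a + 1).choose (t + 2) + mac t (a - (macTop t a).choose (t + 1)) := by
  rw [mac, if_neg ha, macTop]

lemma mac_lt_choose_succ {t m r : ℕ} (hr : r < m.choose t) : mac t r < (m + 1).choose (t + 1) := by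
  induction t generalizing m r with
  | zero => simp [mac]
  | succ t ih =>
    obtain rfl | hr0 := eq_or_ne r 0
    · have : t + 1 ≤ m := by
        by_contra! h
        simp [Nat.choose_eq_zero_of_lt h] at hr
      simp [mac, Nat.choose_pos (by omega : t + 2 ≤ m + 1)]
    have hNr := choose_macTop_le t r
    have hrN := lt_choose_macTop_succ t r
    set N := macTop t r
    have hNm : N < m := not_le.1 fun h => hr.not_ge ((Nat.choose_le_choose _ h).trans hNr)
    have hrem : r - N.choose (t + 1) < N.choose t := by
      rw [Nat.choose_succ_succ'] at hrN
      omega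
    calc mac (t + 1) r = (N + 1).choose (t + 2) + mac t (r - N.choose (t + 1)) :=
          mac_succ_of_ne_zero hr0
      _ < (N + 1).choose (t + 2) + (N + 1).choose (t + 1) := by gcongr; exact ih hrem
      _ = (N + 2).choose (t + 2) := by rw [Nat.choose_succ_succ (N + 1) (t + 1)]; ring
      _ ≤ (m + 1).choose (t + 2) := Nat.choose_le_choose _ (by omega)

lemma mac_monotone (t : ℕ) : Monotone (mac t) := by
  induction t with
  | zero => exact fun _ _ _ => le_rfl
  | succ t ih =>
    intro a b hab
    obtain rfl | ha0 := eq_or_ne a 0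
    · simp [mac]
    have hb0 : b ≠ 0 := by omega
    have hNab : macTop t a ≤ macTop t b := le_macTop_iff.2 ((choose_macTop_le t a).trans hab)
    rcases hNab.eq_or_lt with hN | hN
    · rw [mac_succ_of_ne_zero ha0, mac_succ_of_ne_zero hb0, hN]
      gcongr
      exact ih (by omega)
    · refine (calc mac (t + 1) a < (macTop t a + 1 + 1).choose (t + 1 + 1) :=
            mac_lt_choose_succ (lt_choose_macTop_succ t a)
        _ ≤ (macTop t b + 1).choose (t + 2) := Nat.choose_le_choose _ (by omega)
        _ ≤ mac (t + 1) b := by rw [mac_succ_of_ne_zero hb0]; exact Nat.le_add_right _ _).le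

lemma sum_range_pred_smul_eq_sum_Ico_sum_Ico {M : Type*} [AddCommMonoid M] (f : ℕ → M) (s : ℕ) :
    ∑ j ∈ range s, (j - 1) • f j = ∑ j ∈ Ico 2 s, ∑ i ∈ Ico j s, f i := by
  rw [sum_comm' (t' := range s) (s' := fun i => Ico 2 (i + 1))]
  · refine sum_congr rfl fun i _ => ?_
    rw [sum_const, Nat.card_Ico]
    rfl
  · intro j i
    simp only [mem_Ico, mem_range]
    omega

lemma exists_greatest_neg {T : ℕ → ℤ} {n j₀ : ℕ} (hT : ∀ j, n < j → 0 ≤ T j)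
    (hj₀ : T j₀ < 0) : ∃ q, j₀ ≤ q ∧ T q < 0 ∧ ∀ j, q < j → 0 ≤ T j := by
  have hj₀n : j₀ ≤ n := not_lt.1 fun h => (hT j₀ h).not_gt hj₀
  refine ⟨Nat.findGreatest (fun j => T j < 0) n, Nat.le_findGreatest hj₀n hj₀,
    Nat.findGreatest_spec (P := fun j => T j < 0) hj₀n hj₀, fun j hj => ?_⟩
  rcases le_or_gt j n with hjn | hnj
  · exact not_lt.1 (Nat.findGreatest_is_greatest hj hjn)
  · exact hT j hnj

def tailDiff (x y : ℕ → ℕ) (s a : ℕ) : ℤ := ∑ i ∈ Ico a s, ((x i : ℤ) - y i)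

lemma tailDiff_of_le {x y : ℕ → ℕ} {s a : ℕ} (h : s ≤ a) : tailDiff x y s a = 0 := by
  simp [tailDiff, Ico_eq_empty_of_le h]

lemma tailDiff_of_lt {x y : ℕ → ℕ} {s a : ℕ} (h : a < s) :
    tailDiff x y s a = x a - y a + tailDiff x y s (a + 1) :=
  sum_eq_sum_Ico_succ_bot h _

lemma mult_sub_mult (x y : ℕ → ℕ) (s : ℕ) : (mult x s : ℤ) - mult y s = tailDiff x y s 0 := by
  rw [mult, mult, tailDiff, range_eq_Ico]
  push_cast
  exact (sum_sub_distrib ..).symm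

lemma genus_sub_genus (x y : ℕ → ℕ) (s : ℕ) :
    (genus x s : ℤ) - genus y s = ∑ j ∈ Ico 2 s, tailDiff x y s j := by
  simp only [tailDiff]
  rw [← sum_range_pred_smul_eq_sum_Ico_sum_Ico (fun i => (x i : ℤ) - y i), genus, genus]
  push_cast
  rw [← sum_sub_distrib]
  refine sum_congr rfl fun j _ => ?_
  rw [nsmul_eq_mul]
  ring

def splice (y : ℕ → ℕ) (q c : ℕ) (x : ℕ → ℕ) : ℕ → ℕ :=
  fun j => if j < q then y j else if j = q then c else x j

section splice

variable {x y : ℕ → ℕ} {q c : ℕ}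

lemma splice_of_lt {j : ℕ} (hj : j < q) : splice y q c x j = y j := if_pos hj

@[simp] lemma splice_self : splice y q c x q = c := by simp [splice]

lemma splice_of_gt {j : ℕ} (hj : q < j) : splice y q c x j = x j := by
  simp [splice, hj.not_gt, hj.ne']

lemma IsOSeq.splice {s : ℕ} (hy : IsOSeq y s) (hx : IsOSeq x s) (hq : 0 < q) (hqs : q < s)
    (hxc : x q ≤ c) (hcy : c ≤ y q) : IsOSeq (splice y q c x) s := by
  obtain ⟨hy0, hys, hymac⟩ := hy
  obtain ⟨-, hxs, hxmac⟩ := hx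
  refine ⟨by rw [splice_of_lt hq, hy0], fun i => ?_, fun t ht => ?_⟩
  · rcases lt_trichotomy i q with hi | rfl | hi
    · rw [splice_of_lt hi, hys]
    · have := (hxs i).2 hqs
      simp only [splice_self]
      omega
    · rw [splice_of_gt hi, hxs]
  · rcases lt_trichotomy (t + 1) q with ht1 | ht1 | ht1
    · rw [splice_of_lt ht1, splice_of_lt (by omega)]
      exact hymac t ht
    · subst ht1
      rw [splice_self, splice_of_lt (lt_add_one t)]
      exact hcy.trans (hymac t ht)
    · rw [splice_of_gt ht1]
      refine (hxmac t ht).trans (mac_monotone t ?_)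
      rcases (Nat.le_of_lt_succ ht1).eq_or_lt with rfl | hqt
      · rwa [splice_self]
      · rw [splice_of_gt hqt]

lemma tailDiff_splice_of_le {s j : ℕ} (hqs : q < s) (hj : j ≤ q) :
    tailDiff (splice y q c x) y s j = c - y q + tailDiff x y s (q + 1) := by
  rw [tailDiff, ← sum_Ico_consecutive _ hj hqs.le, sum_eq_sum_Ico_succ_bot hqs,
    sum_eq_zero fun i hi => by rw [splice_of_lt (mem_Ico.1 hi).2, sub_self], splice_self, zero_add]
  congr 1
  exact sum_congr rfl fun i hi => by rw [splice_of_gt (mem_Ico.1 hi).1]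

lemma tailDiff_splice_of_gt {s j : ℕ} (hj : q < j) :
    tailDiff (splice y q c x) y s j = tailDiff x y s j :=
  sum_congr rfl fun i hi => by rw [splice_of_gt (hj.trans_le (mem_Ico.1 hi).1)]

end splice

lemma exists_isOSeq_oLT_genus_sub {x y : ℕ → ℕ} {s q : ℕ} (hx : IsOSeq x s) (hy : IsOSeq y s)
    (hq : 0 < q) (hTq : tailDiff x y s q < 0) (hTq' : 0 ≤ tailDiff x y s (q + 1)) :
    ∃ z, IsOSeq z s ∧ mult z s = mult y s ∧ oLT x z ∧
      (genus z s : ℤ) - genus y s = ∑ j ∈ Ico (q + 1) s, tailDiff x y s j := by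
  have hqs : q < s := not_le.1 fun h => hTq.ne (tailDiff_of_le h)
  have hTq_eq := tailDiff_of_lt (x := x) (y := y) hqs
  set c := ((y q : ℤ) - tailDiff x y s (q + 1)).toNat
  have hc : (c : ℤ) = y q - tailDiff x y s (q + 1) := Int.toNat_of_nonneg (by omega)
  have hT_le (j : ℕ) (hj : j ≤ q) : tailDiff (splice y q c x) y s j = 0 := by
    rw [tailDiff_splice_of_le hqs hj]
    omega
  refine ⟨splice y q c x, hy.splice hx hq hqs (by omega) (by omega), ?_,
    ⟨q, by rw [splice_self]; omega, fun j hj => (splice_of_gt hj).symm⟩, ?_⟩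
  · have := mult_sub_mult (splice y q c x) y s
    rw [hT_le 0 hq.le] at this
    omega
  · rw [genus_sub_genus, ← sum_Ico_consecutive _ (by omega : 2 ≤ q + 1) hqs,
      sum_eq_zero fun j hj => hT_le j (Nat.le_of_lt_succ (mem_Ico.1 hj).2), zero_add]
    exact sum_congr rfl fun j hj => tailDiff_splice_of_gt (mem_Ico.1 hj).1

theorem stmt6_general (d s : ℕ) (h k : ℕ → ℕ)
    (hOh : IsOSeq h s) (hOk : IsOSeq k s)
    (hek : mult k s = d)
    (hlt : oLT k h) (hg : genus h s < genus k s) :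
    ∃ hb : ℕ → ℕ, IsOSeq hb s ∧ mult hb s = d ∧ oLT h hb ∧ genus k s < genus hb s := by
  obtain ⟨l, hkl, hhk⟩ := hlt
  have hls : l < s := (hOh.2.1 l).1 (by omega)
  have hT_gt (j : ℕ) (hj : l < j) : tailDiff h k s j = 0 :=
    sum_eq_zero fun i hi => by rw [hhk i (hj.trans_le (mem_Ico.1 hi).1), sub_self]
  have hTl : 0 < tailDiff h k s l := by
    rw [tailDiff_of_lt hls, hT_gt _ (lt_add_one l)]
    omega
  obtain ⟨j₀, hj₀, hTj₀⟩ : ∃ j ∈ Ico 2 s, tailDiff h k s j < 0 := by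
    by_contra! hT
    have := genus_sub_genus h k s
    have := sum_nonneg hT
    omega
  obtain ⟨q, hj₀q, hTq, hT_nonneg⟩ := exists_greatest_neg (fun j hj => (hT_gt j hj).ge) hTj₀
  have hql : q < l := by
    rcases lt_trichotomy q l with hql | rfl | hlq
    · exact hql
    · omega
    · exact absurd (hT_gt q hlq) hTq.ne
  obtain ⟨z, hz, hmz, hhz, hgz⟩ :=
    exists_isOSeq_oLT_genus_sub hOh hOk (by grind) hTq (hT_nonneg _ (lt_add_one q))
  refine ⟨z, hz, hmz.trans hek, hhz, ?_⟩
  have : tailDiff h k s l ≤ ∑ j ∈ Ico (q + 1) s, tailDiff h k s j :=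
    single_le_sum (fun j hj => hT_nonneg j (mem_Ico.1 hj).1) (mem_Ico.2 ⟨hql, hls⟩)
  omega

/-- Let `d ≥ s ≥ 2` and let `h`, `k` be finite O-sequences of multiplicity
`d` and length `s` with `k < h` in the total order and `g(k) > g(h)`. Then there is a finite
O-sequence `h̄` of multiplicity `d` and length `s` with `h < h̄` and `g(h̄) > g(k)`. -/
theorem stmt6 (d s : ℕ) (h k : ℕ → ℕ) (hs : 2 ≤ s) (hsd : s ≤ d)
    (hOh : IsOSeq h s) (hOk : IsOSeq k s)
    (heh : mult h s = d) (hek : mult k s = d)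
    (hlt : oLT k h) (hg : genus h s < genus k s) :
    ∃ hb : ℕ → ℕ, IsOSeq hb s ∧ mult hb s = d ∧ oLT h hb ∧ genus k s < genus hb s :=
  stmt6_general d s h k hOh hOk hek hlt hg
end

section
/- For every d > 2 and every s with ⌊d/2⌋ + 1 ≤ s ≤ d, the maximum with respect to the total order < of the set of finite O-sequences of multiplicity d and length s is h_s(d) = (1, 2^{d-s}, 1^{2s-d-1}); consequently, the maximal genus of a finite O-sequence of multiplicity d and length s equals g_s(d) = C(s-1, 2) + C(d-s, 2). -/
theorem Nat.choose_two_add (m n : ℕ) :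
    (m + n).choose 2 = m.choose 2 + m * n + n.choose 2 := by
  induction n with
  | zero => simp
  | succ n ih =>
    rw [← Nat.add_assoc, Nat.choose_succ_succ', Nat.choose_succ_succ' n, ih,
      Nat.choose_one_right, Nat.choose_one_right]
    ring

theorem Finset.sum_range_id_eq_choose_two (n : ℕ) : ∑ i ∈ Finset.range n, i = n.choose 2 :=
  (Finset.sum_range_id n).trans (Nat.choose_two_right n).symm

theorem sum_mul_le_choose_sum (a : ℕ → ℕ) (ha : ∀ {i j}, i ≤ j → 0 < a j → 0 < a i) (n : ℕ) :
    ∑ i ∈ Finset.range n, i * a i ≤ (∑ i ∈ Finset.range n, a i).choose 2 := by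
  induction n with
  | zero => simp
  | succ n ih =>
    rw [Finset.sum_range_succ, Finset.sum_range_succ, Nat.choose_two_add]
    set S := ∑ i ∈ Finset.range n, a i
    rcases Nat.eq_zero_or_pos (a n) with han | han
    · simpa [han] using ih
    have hnS : n ≤ S := by
      simpa using Finset.sum_le_sum (f := fun _ => 1) fun i hi =>
        Nat.succ_le_of_lt (ha (Finset.mem_range.1 hi).le han)
    have := Nat.mul_le_mul_right (a n) hnS
    omega

theorem mac_zero (t : ℕ) : mac t 0 = 0 := by
  cases t <;> simp [mac]

theorem mac_one {t : ℕ} (ht : 1 ≤ t) : mac t 1 = 1 := by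
  obtain ⟨t, rfl⟩ : ∃ t', t = t' + 1 := ⟨t - 1, by omega⟩
  have hk : Nat.findGreatest (fun n => Nat.choose n (t + 1) ≤ 1) (1 + t + 1) = t + 1 := by
    rw [Nat.findGreatest_eq_iff]
    refine ⟨by omega, fun _ => by simp, fun n hn hn' hP => ?_⟩
    obtain rfl : n = t + 2 := by omega
    rw [Nat.choose_succ_self_right] at hP
    omega
  simp [mac, hk, mac_zero]

theorem le_mac {t : ℕ} (ht : 1 ≤ t) (a : ℕ) : a ≤ mac t a := by
  induction t generalizing a with
  | zero => omega
  | succ t ih =>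
    rcases Nat.eq_zero_or_pos a with rfl | ha
    · exact Nat.zero_le _
    simp only [mac, ha.ne', if_false]
    set k := Nat.findGreatest (fun n => Nat.choose n (t + 1) ≤ a) (a + t + 1)
    have hk : Nat.choose k (t + 1) ≤ Nat.choose (k + 1) (t + 2) := by
      rw [Nat.choose_succ_succ']
      omega
    have hrest : a - Nat.choose k (t + 1) ≤ mac t (a - Nat.choose k (t + 1)) := by
      rcases Nat.eq_zero_or_pos t with rfl | ht
      -- for `a^⟨1⟩` the greedy choice is `k ≥ a`, so nothing is left for `mac 0 = 0`
      · have : a ≤ k := Nat.le_findGreatest (by omega) (by simp)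
        simp only [zero_add, Nat.choose_one_right]
        omega
      · exact ih ht _
    omega

theorem mac_le_one {t a : ℕ} (ht : 1 ≤ t) (ha : a ≤ 1) : mac t a ≤ 1 := by
  interval_cases a
  · simp [mac_zero]
  · simp [mac_one ht]

namespace IsOSeq

variable {h : ℕ → ℕ} {s : ℕ}

theorem one_le_length (hh : IsOSeq h s) : 1 ≤ s := by
  have := (hh.2.1 0).1
  rw [hh.1] at this
  omega

theorem pos {j : ℕ} (hh : IsOSeq h s) (hj : j < s) : 0 < h j := (hh.2.1 j).2 hj

theorem eq_zero {j : ℕ} (hh : IsOSeq h s) (hj : s ≤ j) : h j = 0 := by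
  have := (hh.2.1 j).1
  omega

theorem one_lt_of_le {i j : ℕ} (hh : IsOSeq h s) (hi : 1 ≤ i) (hij : i ≤ j)
    (hj : 1 < h j) : 1 < h i := by
  induction j, hij using Nat.le_induction with
  | base => exact hj
  | succ j hij ih =>
    apply ih
    by_contra! hle
    have := hh.2.2 j (hi.trans hij)
    have := mac_le_one (hi.trans hij) hle
    omega

end IsOSeq

theorem mult_succ_eq {h : ℕ → ℕ} {n : ℕ} (hpos : ∀ i < n, 0 < h (i + 1)) :
    mult h (n + 1) = h 0 + n + ∑ i ∈ Finset.range n, (h (i + 1) - 1) := by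
  have : ∑ i ∈ Finset.range n, h (i + 1) = ∑ i ∈ Finset.range n, (1 + (h (i + 1) - 1)) :=
    Finset.sum_congr rfl fun i hi => by have := hpos i (Finset.mem_range.1 hi); omega
  rw [mult, Finset.sum_range_succ', this, Finset.sum_add_distrib]
  simp only [Finset.sum_const, Finset.card_range, smul_eq_mul, mul_one]
  ring

theorem genus_succ_eq {h : ℕ → ℕ} {n : ℕ} (hpos : ∀ i < n, 0 < h (i + 1)) :
    genus h (n + 1) = n.choose 2 + ∑ i ∈ Finset.range n, i * (h (i + 1) - 1) := by
  have : ∑ i ∈ Finset.range n, i * h (i + 1) =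
      ∑ i ∈ Finset.range n, (i + i * (h (i + 1) - 1)) :=
    Finset.sum_congr rfl fun i hi => by
      obtain ⟨c, hc⟩ : ∃ c, h (i + 1) = c + 1 := ⟨h (i + 1) - 1, by
        have := hpos i (Finset.mem_range.1 hi); omega⟩
      rw [hc, Nat.add_sub_cancel]
      ring
  rw [genus, Finset.sum_range_succ']
  simp only [Nat.add_sub_cancel, zero_tsub, zero_mul, add_zero]
  rw [this, Finset.sum_add_distrib, Finset.sum_range_id_eq_choose_two]

theorem Finset.sum_range_ite_lt {M : Type*} [AddCommMonoid M] (f : ℕ → M) {m n : ℕ}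
    (hmn : m ≤ n) :
    ∑ i ∈ Finset.range n, (if i < m then f i else 0) = ∑ i ∈ Finset.range m, f i := by
  rw [← Finset.sum_filter]
  congr 1
  ext i
  simp only [Finset.mem_filter, Finset.mem_range]
  omega

theorem IsOSeq.genus_le {h : ℕ → ℕ} {s : ℕ} (hh : IsOSeq h s) :
    genus h s ≤ (s - 1).choose 2 + (mult h s - s).choose 2 := by
  obtain ⟨n, rfl⟩ : ∃ n, s = n + 1 := ⟨s - 1, by have := hh.one_le_length; omega⟩
  have hpos : ∀ i < n, 0 < h (i + 1) := fun i hi => hh.pos (by omega)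
  have hexcess : ∀ {i j : ℕ}, i ≤ j → 0 < h (j + 1) - 1 → 0 < h (i + 1) - 1 :=
    fun {i j} hij hj => Nat.sub_pos_of_lt
      (hh.one_lt_of_le (i := i + 1) (j := j + 1) (by omega) (by omega) (by omega))
  rw [genus_succ_eq hpos, mult_succ_eq hpos, hh.1, Nat.add_sub_cancel, Nat.add_comm 1 n,
    Nat.add_sub_cancel_left]
  exact Nat.add_le_add_left (sum_mul_le_choose_sum _ hexcess n) _

theorem exists_last_ne {k m : ℕ → ℕ} {s : ℕ} (hk : ∀ j, s ≤ j → k j = 0)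
    (hm : ∀ j, s ≤ j → m j = 0) (hne : k ≠ m) : ∃ ℓ, k ℓ ≠ m ℓ ∧ ∀ j, ℓ < j → k j = m j := by
  have hlt : ∀ j, k j ≠ m j → j < s := fun j hj => by
    by_contra! hsj
    exact hj ((hk j hsj).trans (hm j hsj).symm)
  set S := (Finset.range s).filter fun j => k j ≠ m j
  obtain ⟨j₀, hj₀⟩ := Function.ne_iff.1 hne
  have hS : S.Nonempty := ⟨j₀, Finset.mem_filter.2 ⟨Finset.mem_range.2 (hlt j₀ hj₀), hj₀⟩⟩
  refine ⟨S.max' hS, (Finset.mem_filter.1 (S.max'_mem hS)).2, fun j hj => ?_⟩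
  by_contra hkj
  exact (S.le_max' j (Finset.mem_filter.2 ⟨Finset.mem_range.2 (hlt j hkj), hkj⟩)).not_gt hj

theorem oLT_of_sum_range_eq {k m : ℕ → ℕ} {s : ℕ} (hk : ∀ j, s ≤ j → k j = 0)
    (hm : ∀ j, s ≤ j → m j = 0) (hne : k ≠ m)
    (hsum : ∑ j ∈ Finset.range s, k j = ∑ j ∈ Finset.range s, m j)
    (hdom : ∀ ℓ, m ℓ < k ℓ → ∀ j < ℓ, m j ≤ k j) : oLT k m := by
  obtain ⟨ℓ, hℓ, htail⟩ := exists_last_ne hk hm hne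
  refine ⟨ℓ, ?_, htail⟩
  by_contra! hle
  have hlt : m ℓ < k ℓ := lt_of_le_of_ne hle (Ne.symm hℓ)
  have hℓs : ℓ + 1 ≤ s := by
    by_contra! hsℓ
    rw [hk ℓ (by omega)] at hlt
    omega
  have hhead : ∑ j ∈ Finset.range (ℓ + 1), m j < ∑ j ∈ Finset.range (ℓ + 1), k j := by
    refine Finset.sum_lt_sum (fun j hj => ?_) ⟨ℓ, Finset.self_mem_range_succ ℓ, hlt⟩
    rcases (Nat.lt_succ_iff.1 (Finset.mem_range.1 hj)).lt_or_eq with hjℓ | rfl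
    exacts [hdom ℓ hlt j hjℓ, hlt.le]
  have htail_sum : ∑ j ∈ Finset.Ico (ℓ + 1) s, k j = ∑ j ∈ Finset.Ico (ℓ + 1) s, m j :=
    Finset.sum_congr rfl fun j hj => htail j (Finset.mem_Ico.1 hj).1
  rw [← Finset.sum_range_add_sum_Ico _ hℓs, ← Finset.sum_range_add_sum_Ico _ hℓs,
    htail_sum] at hsum
  omega

section maxSeq

variable {d s : ℕ}

theorem maxSeq_le_two {j : ℕ} (hj : 1 ≤ j) : maxSeq d s j ≤ 2 := by
  unfold maxSeq
  grind

theorem maxSeq_succ_sub_one {i : ℕ} (hi : i + 1 < s) :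
    maxSeq d s (i + 1) - 1 = if i < d - s then 1 else 0 := by
  unfold maxSeq
  grind

theorem maxSeq_isOSeq (hs : d - s < s) : IsOSeq (maxSeq d s) s := by
  have hanti : ∀ t, 1 ≤ t → maxSeq d s (t + 1) ≤ maxSeq d s t := fun t ht => by
    unfold maxSeq
    grind
  refine ⟨by simp [maxSeq], fun i => ?_, fun t ht => (hanti t ht).trans (le_mac ht _)⟩
  unfold maxSeq
  grind

theorem maxSeq_mult (hs : d - s < s) (hsd : s ≤ d) : mult (maxSeq d s) s = d := by
  have hmax := maxSeq_isOSeq hs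
  obtain ⟨n, rfl⟩ : ∃ n, s = n + 1 := ⟨s - 1, by omega⟩
  rw [mult_succ_eq fun i hi => hmax.pos (by omega), hmax.1,
    Finset.sum_congr rfl fun i hi => maxSeq_succ_sub_one (by simpa using hi),
    Finset.sum_range_ite_lt _ (by omega)]
  simp only [Finset.sum_const, Finset.card_range, smul_eq_mul, mul_one]
  omega

theorem maxSeq_genus (hs : d - s < s) :
    genus (maxSeq d s) s = (s - 1).choose 2 + (d - s).choose 2 := by
  have hmax := maxSeq_isOSeq hs
  obtain ⟨n, rfl⟩ : ∃ n, s = n + 1 := ⟨s - 1, by omega⟩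
  rw [genus_succ_eq fun i hi => hmax.pos (by omega), Nat.add_sub_cancel,
    Finset.sum_congr rfl fun i hi => by rw [maxSeq_succ_sub_one (by simpa using hi), mul_ite,
      mul_one, mul_zero], Finset.sum_range_ite_lt _ (by omega),
    Finset.sum_range_id_eq_choose_two]

theorem IsOSeq.oLT_maxSeq {k : ℕ → ℕ} (hk : IsOSeq k s) (hs : d - s < s) (hsd : s ≤ d)
    (hm : mult k s = d) (hne : k ≠ maxSeq d s) : oLT k (maxSeq d s) := by
  have hmax := maxSeq_isOSeq hs
  refine oLT_of_sum_range_eq (fun j => hk.eq_zero) (fun j => hmax.eq_zero) hne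
    (hm.trans (maxSeq_mult hs hsd).symm) fun ℓ hℓ j hj => ?_
  rcases Nat.eq_zero_or_pos j with rfl | hj0
  · rw [hk.1, hmax.1]
  have hℓs : ℓ < s := by
    by_contra! hsℓ
    rw [hk.eq_zero hsℓ] at hℓ
    omega
  have := hmax.pos hℓs
  exact (maxSeq_le_two hj0).trans (hk.one_lt_of_le hj0 hj.le (by omega))

end maxSeq

theorem stmt9_general (d s : ℕ) (hs1 : d / 2 + 1 ≤ s) (hs2 : s ≤ d) :
    IsOSeq (maxSeq d s) s ∧ mult (maxSeq d s) s = d ∧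
    (∀ k : ℕ → ℕ, IsOSeq k s → mult k s = d → k ≠ maxSeq d s → oLT k (maxSeq d s)) ∧
    genus (maxSeq d s) s = Nat.choose (s - 1) 2 + Nat.choose (d - s) 2 ∧
    IsGreatest (genusSet d s) (Nat.choose (s - 1) 2 + Nat.choose (d - s) 2) := by
  have hs : d - s < s := by omega
  have hmax := maxSeq_isOSeq hs
  refine ⟨hmax, maxSeq_mult hs hs2, fun k hk hm hne => hk.oLT_maxSeq hs hs2 hm hne,
    maxSeq_genus hs, ⟨⟨_, hmax, maxSeq_mult hs hs2, maxSeq_genus hs⟩, ?_⟩⟩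
  rintro _ ⟨h, hh, rfl, rfl⟩
  exact hh.genus_le

/-- For every `d > 2` and every `s` with `⌊d/2⌋ + 1 ≤ s ≤ d`, the maximum
with respect to the total order of the finite O-sequences of multiplicity `d` and length `s`
is `(1, 2^{d-s}, 1^{2s-d-1})`; consequently the maximal genus of a finite O-sequence of
multiplicity `d` and length `s` equals `C(s-1,2) + C(d-s,2)`. -/
theorem stmt9 (d s : ℕ) (hd : 2 < d) (hs1 : d / 2 + 1 ≤ s) (hs2 : s ≤ d) :
    IsOSeq (maxSeq d s) s ∧ mult (maxSeq d s) s = d ∧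
    (∀ k : ℕ → ℕ, IsOSeq k s → mult k s = d → k ≠ maxSeq d s → oLT k (maxSeq d s)) ∧
    genus (maxSeq d s) s = Nat.choose (s - 1) 2 + Nat.choose (d - s) 2 ∧
    IsGreatest (genusSet d s) (Nat.choose (s - 1) 2 + Nat.choose (d - s) 2) :=
  stmt9_general d s hs1 hs2
end
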